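/- The polynomials P_n(t) = ∑_{π ∈ AV₁₃₂(n)} t^{a₂₁(π)}, where a₂₁(π) is the number of inversions of π, satisfy the recurrence P_n(t) = ∑_{k=1}^{n} t^{k(n-k)} P_{k-1}(t) P_{n-k}(t) with P_0(t) = 1. -/

import Mathlib

open Finset

/-- A permutation of `{1,…,n}` (modeled on `Fin n`) is 132-avoiding if there are
no indices `i < j < l` with `π i < π l < π j`. -/
def avoids132 {n : ℕ} (π : Equiv.Perm (Fin n)) : Prop :=
  ∀ i j l : Fin n, i < j → j < l → ¬(π i < π l ∧ π l < π j)

instance avoids132.dec {n : ℕ} : DecidablePred (avoids132 (n := n)) := fun π => by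
  unfold avoids132; infer_instance

/-- A permutation is 123-avoiding if there are no indices `i < j < l` with
`π i < π j < π l`. -/
def avoids123 {n : ℕ} (π : Equiv.Perm (Fin n)) : Prop :=
  ∀ i j l : Fin n, i < j → j < l → ¬(π i < π j ∧ π j < π l)

instance avoids123.dec {n : ℕ} : DecidablePred (avoids123 (n := n)) := fun π => by
  unfold avoids123; infer_instance

/-- The finite set of 132-avoiding permutations of `{1,…,n}`. -/
def AV132 (n : ℕ) : Finset (Equiv.Perm (Fin n)) := univ.filter avoids132

/-- The finite set of 123-avoiding permutations of `{1,…,n}`. -/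
def AV123 (n : ℕ) : Finset (Equiv.Perm (Fin n)) := univ.filter avoids123

/-- number of non-inversions: pairs `i < j` with `π i < π j` (pattern 12). -/
def a12 {n : ℕ} (π : Equiv.Perm (Fin n)) : ℕ :=
  (univ.filter (fun p : Fin n × Fin n => p.1 < p.2 ∧ π p.1 < π p.2)).card

/-- number of inversions: pairs `i < j` with `π j < π i` (pattern 21). -/
def a21 {n : ℕ} (π : Equiv.Perm (Fin n)) : ℕ :=
  (univ.filter (fun p : Fin n × Fin n => p.1 < p.2 ∧ π p.2 < π p.1)).card

/-- occurrences of pattern 123: triples `i < j < l` with `π i < π j < π l`. -/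
def a123 {n : ℕ} (π : Equiv.Perm (Fin n)) : ℕ :=
  (univ.filter (fun p : Fin n × Fin n × Fin n =>
    p.1 < p.2.1 ∧ p.2.1 < p.2.2 ∧ π p.1 < π p.2.1 ∧ π p.2.1 < π p.2.2)).card

/-- occurrences of pattern 321: triples `i < j < l` with `π l < π j < π i`. -/
def a321 {n : ℕ} (π : Equiv.Perm (Fin n)) : ℕ :=
  (univ.filter (fun p : Fin n × Fin n × Fin n =>
    p.1 < p.2.1 ∧ p.2.1 < p.2.2 ∧ π p.2.2 < π p.2.1 ∧ π p.2.1 < π p.1)).card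

/-- occurrences of pattern 231: triples `i < j < l` with `π l < π i < π j`. -/
def a231 {n : ℕ} (π : Equiv.Perm (Fin n)) : ℕ :=
  (univ.filter (fun p : Fin n × Fin n × Fin n =>
    p.1 < p.2.1 ∧ p.2.1 < p.2.2 ∧ π p.2.2 < π p.1 ∧ π p.1 < π p.2.1)).card

/-- occurrences of pattern 213: triples `i < j < l` with `π j < π i < π l`. -/
def a213 {n : ℕ} (π : Equiv.Perm (Fin n)) : ℕ :=
  (univ.filter (fun p : Fin n × Fin n × Fin n =>
    p.1 < p.2.1 ∧ p.2.1 < p.2.2 ∧ π p.2.1 < π p.1 ∧ π p.1 < π p.2.2)).card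

/-- occurrences of pattern 312: triples `i < j < l` with `π j < π l < π i`. -/
def a312 {n : ℕ} (π : Equiv.Perm (Fin n)) : ℕ :=
  (univ.filter (fun p : Fin n × Fin n × Fin n =>
    p.1 < p.2.1 ∧ p.2.1 < p.2.2 ∧ π p.2.1 < π p.2.2 ∧ π p.2.2 < π p.1)).card

/-- occurrences of pattern 4321: quadruples `i < j < l < m` with
`π m < π l < π j < π i`. -/
def a4321 {n : ℕ} (π : Equiv.Perm (Fin n)) : ℕ :=
  (univ.filter (fun p : Fin n × Fin n × Fin n × Fin n =>
    p.1 < p.2.1 ∧ p.2.1 < p.2.2.1 ∧ p.2.2.1 < p.2.2.2 ∧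
    π p.2.2.2 < π p.2.2.1 ∧ π p.2.2.1 < π p.2.1 ∧ π p.2.1 < π p.1)).card

open Polynomial

/-- The weight enumerator of 132-avoiding permutations by inversions. -/
noncomputable def P21 (n : ℕ) : Polynomial ℤ :=
  ∑ π ∈ AV132 n, (Polynomial.X : Polynomial ℤ) ^ a21 π

/-!
Cut a 132-avoiding permutation of length `n` at its largest entry, in position `k`. An entry
before it smaller than an entry after it would form a 132 pattern with it, so every entry
before the maximum exceeds every entry after it: the entries before are the `k - 1` values just
below the maximum and those after are the `n - k` smallest ones. Conversely, any two
132-avoiders of lengths `k - 1` and `n - k` glue in this way to a 132-avoider of length `n`, whose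
inversions are those of the two pieces plus the `k (n - k)` pairs formed by one of the first `k`
entries and one of the last `n - k`.
-/

namespace Fin

variable {m n : ℕ}

theorem castAdd_lt_natAdd (i : Fin m) (j : Fin n) : castAdd n i < natAdd m j := by
  simp only [lt_def, val_castAdd, val_natAdd]; omega

theorem castAdd_lt_castAdd_iff {i j : Fin m} : castAdd n i < castAdd n j ↔ i < j := .rfl

end Fin

section Tuple

variable {α β : Type*} [LinearOrder α] [LinearOrder β] {m n : ℕ}

def invCount (f : Fin n → α) : ℕ :=
  #{p : Fin n × Fin n | p.1 < p.2 ∧ f p.2 < f p.1}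

def Avoids132 (f : Fin n → α) : Prop :=
  ∀ i j l : Fin n, i < j → j < l → ¬(f i < f l ∧ f l < f j)

theorem invCount_eq_sum (f : Fin n → α) :
    invCount f = ∑ i, ∑ j, if i < j ∧ f j < f i then 1 else 0 := by
  rw [invCount, card_filter, ← univ_product_univ, sum_product]

theorem StrictMono.invCount_comp {g : α → β} (hg : StrictMono g) (f : Fin n → α) :
    invCount (g ∘ f) = invCount f := by
  simp only [invCount, Function.comp_apply, hg.lt_iff_lt]

theorem StrictMono.avoids132_comp_iff {g : α → β} (hg : StrictMono g) (f : Fin n → α) :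
    Avoids132 (g ∘ f) ↔ Avoids132 f := by
  simp only [Avoids132, Function.comp_apply, hg.lt_iff_lt]

theorem invCount_append {u : Fin m → α} {v : Fin n → α} (h : ∀ i j, v j < u i) :
    invCount (Fin.append u v) = invCount u + invCount v + m * n := by
  simp only [invCount_eq_sum, Fin.sum_univ_add, Fin.append_left, Fin.append_right]
  simp [Fin.castAdd_lt_castAdd_iff, Fin.castAdd_lt_natAdd, (Fin.castAdd_lt_natAdd _ _).not_gt, h,
    sum_add_distrib]
  ring

theorem invCount_snoc {u : Fin n → α} {x : α} (h : ∀ i, u i < x) :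
    invCount (Fin.snoc u x : Fin (n + 1) → α) = invCount u := by
  simp only [invCount_eq_sum, Fin.sum_univ_castSucc, Fin.snoc_castSucc, Fin.snoc_last]
  simp [(Fin.castSucc_lt_last _).not_gt, (h _).not_gt]

theorem avoids132_append_iff {u : Fin m → α} {v : Fin n → α} (h : ∀ i j, v j < u i) :
    Avoids132 (Fin.append u v) ↔ Avoids132 u ∧ Avoids132 v := by
  simp [Avoids132, Fin.forall_fin_add, Fin.castAdd_lt_castAdd_iff, Fin.castAdd_lt_natAdd,
    (Fin.castAdd_lt_natAdd _ _).not_gt, (h _ _).not_gt]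

theorem avoids132_snoc_iff {u : Fin n → α} {x : α} (h : ∀ i, u i < x) :
    Avoids132 (Fin.snoc u x : Fin (n + 1) → α) ↔ Avoids132 u := by
  simp [Avoids132, Fin.forall_iff_castSucc, (Fin.castSucc_lt_last _).not_gt, (h _).le]

end Tuple

open Equiv Function

theorem a21_eq_invCount {n : ℕ} (π : Perm (Fin n)) : a21 π = invCount (Fin.val ∘ π) :=
  (Fin.val_strictMono.invCount_comp π).symm

theorem avoids132_iff_avoids132_val {n : ℕ} (π : Perm (Fin n)) :
    avoids132 π ↔ Avoids132 (Fin.val ∘ π) :=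
  (Fin.val_strictMono.avoids132_comp_iff π).symm

section PermOfVal

variable {n : ℕ} (f : Fin n → ℕ) (hlt : ∀ i, f i < n) (hf : Injective f)

noncomputable def permOfVal : Perm (Fin n) :=
  Equiv.ofBijective (fun i => ⟨f i, hlt i⟩)
    (Injective.bijective_of_finite fun _ _ h => hf (congrArg Fin.val h))

theorem val_comp_permOfVal : Fin.val ∘ permOfVal f hlt hf = f := rfl

end PermOfVal

theorem Equiv.Perm.val_apply_natAdd_lt {m n : ℕ} {π : Perm (Fin (m + n))}
    (h : ∀ i j, π (Fin.natAdd m j) < π (Fin.castAdd n i)) (j : Fin n) :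
    (π (Fin.natAdd m j) : ℕ) < n := by
  have hsub : univ.image (π ∘ Fin.castAdd n) ⊆ Ioi (π (Fin.natAdd m j)) := by
    simp [subset_iff, h]
  have hcard := card_le_card hsub
  rw [card_image_of_injective _ (π.injective.comp (Fin.castAdd_injective m n)), card_univ,
    Fintype.card_fin, Fin.card_Ioi] at hcard
  have := (π (Fin.natAdd m j)).isLt
  omega

theorem Equiv.Perm.le_val_apply_castAdd {m n : ℕ} {π : Perm (Fin (m + n))}
    (h : ∀ i j, π (Fin.natAdd m j) < π (Fin.castAdd n i)) (i : Fin m) :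
    n ≤ (π (Fin.castAdd n i) : ℕ) := by
  have hsub : univ.image (π ∘ Fin.natAdd m) ⊆ Iio (π (Fin.castAdd n i)) := by
    simp [subset_iff, h]
  have hcard := card_le_card hsub
  rwa [card_image_of_injective _ (π.injective.comp (Fin.natAdd_injective n m)), card_univ,
    Fintype.card_fin, Fin.card_Iio] at hcard

section Glue

variable {a b : ℕ} (σ : Perm (Fin a)) (τ : Perm (Fin b))

/-- In one-line notation on `{0, …, a + b}`, `glue σ τ` is `(b + σ) (a + b) τ`. -/
def glueVal : Fin (a + 1 + b) → ℕ :=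
  Fin.append (Fin.snoc (fun i => b + (σ i : ℕ)) (a + b) : Fin (a + 1) → ℕ) (Fin.val ∘ τ)

variable {σ τ} in
theorem val_lt_snoc (i : Fin (a + 1)) (j : Fin b) :
    (Fin.val ∘ τ) j <
      (Fin.snoc (fun i => b + (σ i : ℕ)) (a + b) : Fin (a + 1) → ℕ) i := by
  have := (τ j).isLt
  induction i using Fin.lastCases <;> simp <;> omega

theorem glueVal_lt (i : Fin (a + 1 + b)) : glueVal σ τ i < a + 1 + b := by
  induction i using Fin.addCases with
  | left i =>
    induction i using Fin.lastCases with
    | last => simp [glueVal]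
    | cast i => simp [glueVal]; omega
  | right j => simp [glueVal]; omega

theorem glueVal_injective : Injective (glueVal σ τ) := by
  refine Fin.append_injective_iff.mpr ⟨?_, Fin.val_injective.comp τ.injective,
    fun i j => (val_lt_snoc i j).ne'⟩
  refine Fin.snoc_injective_of_injective ?_ ?_
  · exact (add_right_injective b).comp (Fin.val_injective.comp σ.injective)
  · rintro ⟨i, hi⟩
    have := (σ i).isLt
    simp only at hi
    omega

noncomputable def glue : Perm (Fin (a + 1 + b)) :=
  permOfVal (glueVal σ τ) (glueVal_lt σ τ) (glueVal_injective σ τ)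

theorem val_glue_castAdd_last : (glue σ τ (Fin.castAdd b (Fin.last a)) : ℕ) = a + b := by
  simp [glue, permOfVal, glueVal]

theorem a21_glue : a21 (glue σ τ) = a21 σ + a21 τ + (a + 1) * b := by
  have hσ : invCount (fun i => b + (σ i : ℕ)) = a21 σ :=
    (add_right_strictMono.invCount_comp _).trans (a21_eq_invCount σ).symm
  rw [a21_eq_invCount, glue, val_comp_permOfVal, glueVal, invCount_append val_lt_snoc,
    invCount_snoc fun i => by have := (σ i).isLt; omega, hσ, ← a21_eq_invCount]

theorem avoids132_glue_iff : avoids132 (glue σ τ) ↔ avoids132 σ ∧ avoids132 τ := by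
  have hσ : Avoids132 (fun i => b + (σ i : ℕ)) ↔ avoids132 σ :=
    (add_right_strictMono.avoids132_comp_iff _).trans (avoids132_iff_avoids132_val σ).symm
  rw [avoids132_iff_avoids132_val, glue, val_comp_permOfVal, glueVal,
    avoids132_append_iff val_lt_snoc, avoids132_snoc_iff fun i => by have := (σ i).isLt; omega,
    hσ, ← avoids132_iff_avoids132_val]

theorem glue_injective2 : Injective2 (glue (a := a) (b := b)) := by
  intro σ σ' τ τ' h
  have hval : glueVal σ τ = glueVal σ' τ' :=
    congrArg (fun π : Perm (Fin (a + 1 + b)) => Fin.val ∘ π) h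
  constructor
  · ext i
    simpa [glueVal] using congrFun hval (Fin.castAdd b i.castSucc)
  · ext j
    simpa [glueVal] using congrFun hval (Fin.natAdd (a + 1) j)

end Glue

section Decompose

variable {a b : ℕ} {π : Perm (Fin (a + 1 + b))}

theorem apply_natAdd_lt_apply_castAdd (hπ : avoids132 π)
    (hmax : (π (Fin.castAdd b (Fin.last a)) : ℕ) = a + b) (i : Fin (a + 1)) (j : Fin b) :
    π (Fin.natAdd (a + 1) j) < π (Fin.castAdd b i) := by
  have hne : ∀ i, π (Fin.natAdd (a + 1) j) ≠ π (Fin.castAdd b i) :=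
    fun i => π.injective.ne (Fin.castAdd_lt_natAdd i j).ne'
  have hlt_max : π (Fin.natAdd (a + 1) j) < π (Fin.castAdd b (Fin.last a)) := by
    have := (π (Fin.natAdd (a + 1) j)).isLt
    have := Fin.val_ne_of_ne (hne (Fin.last a))
    rw [Fin.lt_def, hmax]
    omega
  induction i using Fin.lastCases with
  | last => exact hlt_max
  | cast i =>
    have h132 := hπ _ _ _ (Fin.castAdd_lt_castAdd_iff.mpr (Fin.castSucc_lt_last i))
      (Fin.castAdd_lt_natAdd _ j)
    exact lt_of_le_of_ne (not_lt.mp fun h => h132 ⟨h, hlt_max⟩) (hne _)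

theorem exists_glue_eq (hπ : avoids132 π)
    (hmax : (π (Fin.castAdd b (Fin.last a)) : ℕ) = a + b) :
    ∃ σ τ, glue σ τ = π := by
  have hsep := apply_natAdd_lt_apply_castAdd hπ hmax
  have hleft := π.le_val_apply_castAdd hsep
  have hσ_lt (i : Fin a) : (π (Fin.castAdd b i.castSucc) : ℕ) - b < a := by
    have := Fin.val_ne_of_ne
      (π.injective.ne (Fin.castAdd_lt_castAdd_iff.mpr (Fin.castSucc_lt_last i)).ne)
    have := (π (Fin.castAdd b i.castSucc)).isLt
    have := i.isLt
    omega
  have hσ_inj : Injective fun i : Fin a => (π (Fin.castAdd b i.castSucc) : ℕ) - b := by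
    intro i i' h
    dsimp only at h
    have := hleft i.castSucc
    have := hleft i'.castSucc
    exact Fin.castSucc_injective _ (Fin.castAdd_injective _ _ (π.injective (Fin.ext (by omega))))
  let σ := permOfVal _ hσ_lt hσ_inj
  let τ := permOfVal _ (π.val_apply_natAdd_lt hsep)
    (Fin.val_injective.comp (π.injective.comp (Fin.natAdd_injective _ _)))
  refine ⟨σ, τ, Equiv.ext fun k => Fin.ext ?_⟩
  change glueVal σ τ k = π k
  induction k using Fin.addCases with
  | left i =>
    induction i using Fin.lastCases with
    | last => simp [glueVal, hmax]
    | cast i =>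
      have := hleft i.castSucc
      simp [glueVal, σ, permOfVal]
      omega
  | right j => simp [glueVal, τ, permOfVal]

end Decompose

theorem sum_Icc_one_eq_sum_range {M : Type*} [AddCommMonoid M] (f : ℕ → M) (n : ℕ) :
    ∑ k ∈ Icc 1 n, f k = ∑ k ∈ range n, f (k + 1) := by
  rw [range_eq_Ico, sum_Ico_add', zero_add, Ico_add_one_right_eq_Icc]

theorem P21_zero : P21 0 = 1 := by
  simp [P21, AV132, a21, univ_unique, filter_singleton, avoids132]

theorem sum_pow_a21_filter_apply_eq (a b : ℕ) :
    ∑ π ∈ (AV132 (a + 1 + b)).filter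
        (fun π => (π (Fin.castAdd b (Fin.last a)) : ℕ) = a + b), (X : ℤ[X]) ^ a21 π =
      X ^ ((a + 1) * b) * P21 a * P21 b := by
  rw [P21, P21, mul_assoc, sum_mul_sum, ← sum_product', mul_sum]
  symm
  refine sum_bij (fun p _ => glue p.1 p.2) ?_ ?_ ?_ ?_
  · rintro ⟨σ, τ⟩ h
    simp only [AV132, mem_product, mem_filter, mem_univ, true_and] at h ⊢
    exact ⟨(avoids132_glue_iff σ τ).mpr h, val_glue_castAdd_last σ τ⟩
  · rintro ⟨σ, τ⟩ - ⟨σ', τ'⟩ - h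
    obtain ⟨rfl, rfl⟩ := glue_injective2 h
    rfl
  · intro π h
    simp only [AV132, mem_filter, mem_univ, true_and] at h
    obtain ⟨σ, τ, rfl⟩ := exists_glue_eq h.1 h.2
    exact ⟨(σ, τ), by simpa [AV132] using (avoids132_glue_iff σ τ).mp h.1, rfl⟩
  · rintro ⟨σ, τ⟩ -
    rw [a21_glue, pow_add, pow_add]
    ring

theorem sum_pow_a21_filter_symm_eq {n k : ℕ} (hk : k < n) :
    ∑ π ∈ (AV132 n).filter (fun π => (π.symm ⟨n - 1, by omega⟩ : ℕ) = k),
        (X : ℤ[X]) ^ a21 π =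
      X ^ ((k + 1) * (n - 1 - k)) * P21 k * P21 (n - 1 - k) := by
  obtain ⟨b, rfl⟩ : ∃ b, n = k + 1 + b := ⟨n - 1 - k, by omega⟩
  rw [show k + 1 + b - 1 - k = b by omega, ← sum_pow_a21_filter_apply_eq]
  refine sum_congr (filter_congr fun π _ => ?_) fun _ _ => rfl
  have hpos : (π.symm ⟨k + 1 + b - 1, by omega⟩ : ℕ) = k ↔
      π.symm ⟨k + 1 + b - 1, by omega⟩ = Fin.castAdd b (Fin.last k) := by
    simp [Fin.ext_iff]
  rw [hpos, Equiv.symm_apply_eq, Fin.ext_iff, Fin.val_mk]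
  omega

/-- `P_n(t) = ∑_{k=1}^n t^{k(n-k)} P_{k-1}(t) P_{n-k}(t)`, `P_0 = 1`. -/
theorem P21_recurrence :
    P21 0 = 1 ∧
    ∀ n : ℕ, 1 ≤ n →
      P21 n = ∑ k ∈ Finset.Icc 1 n,
        (Polynomial.X : Polynomial ℤ) ^ (k * (n - k)) * P21 (k - 1) * P21 (n - k) := by
  refine ⟨P21_zero, fun n hn => ?_⟩
  rw [P21, ← sum_fiberwise_of_maps_to (t := range n)
      (g := fun π : Perm (Fin n) => (π.symm ⟨n - 1, by omega⟩ : ℕ))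
      fun π _ => mem_range.mpr (Fin.is_lt _),
    sum_Icc_one_eq_sum_range]
  refine sum_congr rfl fun k hk => ?_
  rw [sum_pow_a21_filter_symm_eq (mem_range.mp hk), add_tsub_cancel_right, Nat.sub_sub,
    add_comm 1 k]
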